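/- Let R, H ≥ 1 be real and Δ ≥ 1. The number of quadruples (r₁, r₂, h₁, h₂) of positive integers with R < r₁, r₂ ≤ 2R, H < h₁, h₂ ≤ 2H and |h₁ r₂ − h₂ r₁| ≤ Δ is at most C·Δ·H·R·(log(4HR)+1)² for an absolute constant C. -/

import Mathlib

open Finset

set_option linter.unreachableTactic false
set_option linter.unnecessarySeqFocus false
set_option linter.unusedTactic false


lemma harm_le (M : ℕ) : ∑ d ∈ Finset.Icc 1 M, (1:ℝ)/d ≤ Real.log M + 1 := by
  have h : ∑ d ∈ Finset.Icc 1 M, (1:ℝ)/d = (harmonic M : ℝ) := by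
    rw [harmonic]
    push_cast
    rw [← Finset.Ico_add_one_right_eq_Icc, Finset.sum_Ico_eq_sum_range]
    simp [add_comm, one_div]
  rw [h]
  have := harmonic_le_one_add_log M
  linarith

lemma gcd_sum_le (M : ℕ) (hM : 1 ≤ M) :
    ∑ p ∈ Finset.Icc 1 M ×ˢ Finset.Icc 1 M, (Nat.gcd p.1 p.2 : ℝ)
      ≤ (M:ℝ)^2 * (Real.log M + 1) := by
  have key : ∀ p ∈ Finset.Icc 1 M ×ˢ Finset.Icc 1 M,
      (Nat.gcd p.1 p.2 : ℝ)
        = ∑ d ∈ Finset.Icc 1 M, if d ∣ p.1 ∧ d ∣ p.2 then (Nat.totient d : ℝ) else 0 := by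
    rintro ⟨h₁, h₂⟩ hp
    simp only [Finset.mem_product, Finset.mem_Icc] at hp
    have hg0 : 0 < Nat.gcd h₁ h₂ := Nat.gcd_pos_of_pos_left _ (by omega)
    have hdiv : (Nat.gcd h₁ h₂).divisors
        = (Finset.Icc 1 M).filter (fun d => d ∣ h₁ ∧ d ∣ h₂) := by
      ext d
      simp only [Nat.mem_divisors, Finset.mem_filter, Finset.mem_Icc]
      constructor
      · rintro ⟨hd, -⟩
        have hd1 : d ∣ h₁ := hd.trans (Nat.gcd_dvd_left _ _)
        have hd2 : d ∣ h₂ := hd.trans (Nat.gcd_dvd_right _ _)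
        refine ⟨⟨Nat.pos_of_dvd_of_pos hd hg0, le_trans (Nat.le_of_dvd (by omega) hd1) hp.1.2⟩, hd1, hd2⟩
      · rintro ⟨-, hd1, hd2⟩
        exact ⟨Nat.dvd_gcd hd1 hd2, by omega⟩
    have hs : ((Nat.gcd h₁ h₂ : ℕ) : ℝ) = ∑ x ∈ (Nat.gcd h₁ h₂).divisors, (Nat.totient x : ℝ) := by
      rw [← Nat.cast_sum]
      exact_mod_cast congrArg (Nat.cast (R := ℝ)) (Nat.sum_totient (Nat.gcd h₁ h₂)).symm
    rw [← Finset.sum_filter, ← hdiv]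
    exact hs
  rw [Finset.sum_congr rfl key, Finset.sum_comm]
  have step : ∀ d ∈ Finset.Icc 1 M,
      (∑ p ∈ Finset.Icc 1 M ×ˢ Finset.Icc 1 M,
        if d ∣ p.1 ∧ d ∣ p.2 then (Nat.totient d : ℝ) else 0) ≤ (M:ℝ)^2 * (1/d) := by
    intro d hd
    simp only [Finset.mem_Icc] at hd
    have hcnt : ((Finset.Icc 1 M).filter (fun x => d ∣ x)).card = M / d := by
      rw [show Finset.Icc 1 M = Finset.Ioc 0 M by rfl]
      exact Nat.Ioc_filter_dvd_card_eq_div M d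
    have inner : ∑ h₂ ∈ Finset.Icc 1 M, (if d ∣ h₂ then (Nat.totient d : ℝ) else 0)
        = ((M / d : ℕ) : ℝ) * (Nat.totient d : ℝ) := by
      rw [← Finset.sum_filter, Finset.sum_const, hcnt, nsmul_eq_mul]
    have hsum : (∑ p ∈ Finset.Icc 1 M ×ˢ Finset.Icc 1 M,
        if d ∣ p.1 ∧ d ∣ p.2 then (Nat.totient d : ℝ) else 0)
        = ((M / d : ℕ) : ℝ)^2 * (Nat.totient d : ℝ) := by
      rw [Finset.sum_product]
      have : ∀ h₁ ∈ Finset.Icc 1 M,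
          (∑ h₂ ∈ Finset.Icc 1 M, if d ∣ h₁ ∧ d ∣ h₂ then (Nat.totient d : ℝ) else 0)
          = if d ∣ h₁ then ((M / d : ℕ) : ℝ) * (Nat.totient d : ℝ) else 0 := by
        intro h₁ _
        by_cases hdh : d ∣ h₁ <;> simp [hdh, inner]
      rw [Finset.sum_congr rfl this, ← Finset.sum_filter, Finset.sum_const, hcnt, nsmul_eq_mul]
      ring
    rw [hsum]
    have hdpos : (0:ℝ) < d := by exact_mod_cast hd.1
    have h1 : ((M / d : ℕ) : ℝ) ≤ (M:ℝ)/d := Nat.cast_div_le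
    have h2 : ((Nat.totient d : ℕ) : ℝ) ≤ (d:ℝ) := by exact_mod_cast Nat.totient_le d
    have h0 : (0:ℝ) ≤ ((M / d : ℕ) : ℝ) := Nat.cast_nonneg _
    have h3 : ((M / d : ℕ) : ℝ)^2 ≤ ((M:ℝ)/d)^2 := by nlinarith
    have h4 : ((M / d : ℕ) : ℝ)^2 * (Nat.totient d : ℝ) ≤ ((M:ℝ)/d)^2 * d :=
      mul_le_mul h3 h2 (Nat.cast_nonneg _) (by positivity)
    have h5 : ((M:ℝ)/d)^2 * d = (M:ℝ)^2 * (1/d) := by field_simp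
    linarith
  calc _ ≤ ∑ d ∈ Finset.Icc 1 M, (M:ℝ)^2 * (1/d) := Finset.sum_le_sum step
    _ = (M:ℝ)^2 * ∑ d ∈ Finset.Icc 1 M, (1:ℝ)/d := by rw [Finset.mul_sum]
    _ ≤ (M:ℝ)^2 * (Real.log M + 1) := by
        apply mul_le_mul_of_nonneg_left (harm_le M) (by positivity)


noncomputable def Aset (R : ℝ) : Finset ℕ :=
  (Finset.Icc 1 ⌊2 * R⌋₊).filter (fun r : ℕ => R < (r : ℝ))

lemma inner_count (R H Δ : ℝ) (hR : 1 ≤ R) (hH : 1 ≤ H) (hΔ : 1 ≤ Δ)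
    (h₁ h₂ : ℕ) (hp1 : 1 ≤ h₁) (hp2 : 1 ≤ h₂) (hH2 : H < (h₂:ℝ)) :
    ((((Aset R ×ˢ Aset R).filter
      (fun r : ℕ × ℕ => |(h₁:ℝ) * r.2 - (h₂:ℝ) * r.1| ≤ Δ)).card : ℝ)
    ≤ (2*Δ/(Nat.gcd h₁ h₂) + 1) * (2*R*(Nat.gcd h₁ h₂)/H + 1)) := by
  set g := Nat.gcd h₁ h₂ with hgdef
  have hg0 : 0 < g := Nat.gcd_pos_of_pos_left _ (by omega)
  set m := h₂ / g with hmdef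
  have hm : g * m = h₂ := Nat.mul_div_cancel' (Nat.gcd_dvd_right _ _)
  have ha : g * (h₁ / g) = h₁ := Nat.mul_div_cancel' (Nat.gcd_dvd_left _ _)
  have hm0 : 0 < m :=
    Nat.div_pos (Nat.le_of_dvd (by omega) (Nat.gcd_dvd_right _ _)) hg0
  set D := ⌊Δ⌋₊ / g with hDdef
  set K := ⌊2*R⌋₊ / m with hKdef
  -- card bound via injection
  have hcard : (((Aset R ×ˢ Aset R).filter
      (fun r : ℕ × ℕ => |(h₁:ℝ) * r.2 - (h₂:ℝ) * r.1| ≤ Δ)).card : ℕ)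
      ≤ (Finset.Icc (-(D:ℤ)) (D:ℤ) ×ˢ Finset.range (K+1)).card := by
    apply Finset.card_le_card_of_injOn
      (fun r : ℕ × ℕ => (((h₁:ℤ) * r.2 - (h₂:ℤ) * r.1) / (g:ℤ), r.2 / m))
    · intro r hr
      simp only [Aset, Finset.mem_coe, Finset.mem_filter, Finset.mem_product, Finset.mem_Icc] at hr
      obtain ⟨⟨hr1, hr2⟩, habs⟩ := hr
      set n : ℤ := (h₁:ℤ) * r.2 - (h₂:ℤ) * r.1 with hndef
      have hdvd : (g:ℤ) ∣ n := by
        apply dvd_sub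
        · exact Dvd.dvd.mul_right (Int.natCast_dvd_natCast.mpr (Nat.gcd_dvd_left _ _)) _
        · exact Dvd.dvd.mul_right (Int.natCast_dvd_natCast.mpr (Nat.gcd_dvd_right _ _)) _
      obtain ⟨k, hk⟩ := hdvd
      have hgne : (g:ℤ) ≠ 0 := by exact_mod_cast hg0.ne'
      have hfk : n / (g:ℤ) = k := by rw [hk, Int.mul_ediv_cancel_left _ hgne]
      have habsR : |(n:ℝ)| ≤ Δ := by rw [hndef]; push_cast; exact habs
      have hnab : n.natAbs ≤ ⌊Δ⌋₊ := by
        apply Nat.le_floor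
        rw [Nat.cast_natAbs, Int.cast_abs] at *
        exact habsR
      have hkab : k.natAbs ≤ D := by
        rw [hDdef]
        rw [Nat.le_div_iff_mul_le hg0]
        have : n.natAbs = k.natAbs * g := by
          rw [hk, Int.natAbs_mul, Int.natAbs_natCast, mul_comm]
        omega
      have hkZ : (k.natAbs : ℤ) ≤ (D:ℤ) := by exact_mod_cast hkab
      have habsk : |k| ≤ (D:ℤ) := by rwa [Int.abs_eq_natAbs]
      simp only [Finset.mem_coe, Finset.mem_product, Finset.mem_Icc, Finset.mem_range]
      constructor
      · rw [hfk]
        exact abs_le.mp habsk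
      · have : r.2 / m ≤ K := Nat.div_le_div_right hr2.1.2
        omega
    · intro r hr r' hr' heq
      simp only [Aset, Finset.mem_coe, Finset.mem_filter, Finset.mem_product, Finset.mem_Icc] at hr hr'
      obtain ⟨⟨⟨hra1, hra2⟩, ⟨hrb1, hrb2⟩⟩, habs⟩ := hr
      obtain ⟨⟨⟨hra1', hra2'⟩, ⟨hrb1', hrb2'⟩⟩, habs'⟩ := hr'
      have hgne : (g:ℤ) ≠ 0 := by exact_mod_cast hg0.ne'
      simp only [Prod.mk.injEq] at heq
      obtain ⟨heq1, heq2⟩ := heq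
      -- recover n = n'
      have hdvd : (g:ℤ) ∣ ((h₁:ℤ) * r.2 - (h₂:ℤ) * r.1) := by
        apply dvd_sub
        · exact Dvd.dvd.mul_right (Int.natCast_dvd_natCast.mpr (Nat.gcd_dvd_left _ _)) _
        · exact Dvd.dvd.mul_right (Int.natCast_dvd_natCast.mpr (Nat.gcd_dvd_right _ _)) _
      have hdvd' : (g:ℤ) ∣ ((h₁:ℤ) * r'.2 - (h₂:ℤ) * r'.1) := by
        apply dvd_sub
        · exact Dvd.dvd.mul_right (Int.natCast_dvd_natCast.mpr (Nat.gcd_dvd_left _ _)) _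
        · exact Dvd.dvd.mul_right (Int.natCast_dvd_natCast.mpr (Nat.gcd_dvd_right _ _)) _
      have hneq : (h₁:ℤ) * r.2 - (h₂:ℤ) * r.1 = (h₁:ℤ) * r'.2 - (h₂:ℤ) * r'.1 := by
        obtain ⟨k, hk⟩ := hdvd
        obtain ⟨k', hk'⟩ := hdvd'
        rw [hk, hk', Int.mul_ediv_cancel_left _ hgne, Int.mul_ediv_cancel_left _ hgne] at heq1
        rw [hk, hk', heq1]
      -- m divides r.2 - r'.2
      have hlin : (h₁:ℤ) * ((r.2:ℤ) - (r'.2:ℤ)) = (h₂:ℤ) * ((r.1:ℤ) - (r'.1:ℤ)) := by ring_nf; linarith [hneq]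
      set a := h₁ / g with hadef
      have hcop : Nat.Coprime a m := Nat.coprime_div_gcd_div_gcd hg0
      have hlin2 : (a:ℤ) * ((r.2:ℤ) - (r'.2:ℤ)) = (m:ℤ) * ((r.1:ℤ) - (r'.1:ℤ)) := by
        have h1 : ((g:ℤ) * a) * ((r.2:ℤ) - (r'.2:ℤ)) = ((g:ℤ) * m) * ((r.1:ℤ) - (r'.1:ℤ)) := by
          have e1 : (g:ℤ) * a = (h₁:ℤ) := by exact_mod_cast congrArg (Nat.cast (R := ℤ)) ha
          have e2 : (g:ℤ) * m = (h₂:ℤ) := by exact_mod_cast congrArg (Nat.cast (R := ℤ)) hm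
          rw [e1, e2]; exact hlin
        have := mul_left_cancel₀ hgne (by linarith [h1] : (g:ℤ) * ((a:ℤ) * ((r.2:ℤ) - (r'.2:ℤ))) = (g:ℤ) * ((m:ℤ) * ((r.1:ℤ) - (r'.1:ℤ))))
        exact this
      have hmdvd : (m:ℤ) ∣ ((r.2:ℤ) - (r'.2:ℤ)) := by
        have hdl : (m:ℤ) ∣ (a:ℤ) * ((r.2:ℤ) - (r'.2:ℤ)) := ⟨_, hlin2⟩
        have hic : IsCoprime (m:ℤ) (a:ℤ) := by
          rw [Int.isCoprime_iff_gcd_eq_one, Int.gcd_natCast_natCast]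
          exact (Nat.coprime_comm.mp hcop)
        exact hic.dvd_of_dvd_mul_left hdl
      have hmod : r'.2 ≡ r.2 [MOD m] := (Nat.modEq_iff_dvd).mpr hmdvd
      have heq22 : r.2 = r'.2 := by
        have hmodeq : r.2 % m = r'.2 % m := Nat.ModEq.symm hmod
        rw [← Nat.div_add_mod r.2 m, ← Nat.div_add_mod r'.2 m, heq2, hmodeq]
      have heq11 : r.1 = r'.1 := by
        have : (h₂:ℤ) * ((r.1:ℤ) - (r'.1:ℤ)) = 0 := by
          rw [← hlin, heq22]; ring
        have h2ne : (h₂:ℤ) ≠ 0 := by exact_mod_cast (by omega : h₂ ≠ 0)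
        have := mul_eq_zero.mp this
        rcases this with h | h
        · exact absurd h h2ne
        · have : (r.1:ℤ) = (r'.1:ℤ) := by linarith
          exact_mod_cast this
      exact Prod.ext heq11 heq22
  -- card of target
  have htarget : ((Finset.Icc (-(D:ℤ)) (D:ℤ) ×ˢ Finset.range (K+1)).card : ℝ)
      = (2*(D:ℝ)+1) * ((K:ℝ)+1) := by
    rw [Finset.card_product, Int.card_Icc, Finset.card_range]
    have : ((D:ℤ) + 1 - -(D:ℤ)).toNat = 2*D+1 := by omega
    rw [this]
    push_cast
    ring
  -- real bounds on D, K
  have hgR : (0:ℝ) < (g:ℝ) := by exact_mod_cast hg0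
  have hD : (D:ℝ) ≤ Δ/(g:ℝ) := by
    calc (D:ℝ) ≤ (⌊Δ⌋₊:ℝ)/(g:ℝ) := Nat.cast_div_le
      _ ≤ Δ/(g:ℝ) := by
          gcongr <;> exact Nat.floor_le (by linarith)
  have hm0R : (0:ℝ) < (m:ℝ) := by exact_mod_cast hm0
  have hmR : (m:ℝ) = (h₂:ℝ)/(g:ℝ) := by
    have e2 : (g:ℝ) * (m:ℝ) = (h₂:ℝ) := by exact_mod_cast congrArg (Nat.cast (R := ℝ)) hm
    field_simp
    linarith
  have hK : (K:ℝ) ≤ 2*R*(g:ℝ)/H := by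
    calc (K:ℝ) ≤ (⌊2*R⌋₊:ℝ)/(m:ℝ) := Nat.cast_div_le
      _ ≤ 2*R/(m:ℝ) := by
          gcongr <;> exact Nat.floor_le (by linarith)
      _ = 2*R*(g:ℝ)/(h₂:ℝ) := by rw [hmR, div_div_eq_mul_div]
      _ ≤ 2*R*(g:ℝ)/H := by
          gcongr <;> first | positivity | linarith
  calc ((((Aset R ×ˢ Aset R).filter
      (fun r : ℕ × ℕ => |(h₁:ℝ) * r.2 - (h₂:ℝ) * r.1| ≤ Δ)).card : ℕ) : ℝ)
      ≤ ((Finset.Icc (-(D:ℤ)) (D:ℤ) ×ˢ Finset.range (K+1)).card : ℝ) := by exact_mod_cast hcard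
    _ = (2*(D:ℝ)+1) * ((K:ℝ)+1) := htarget
    _ ≤ (2*Δ/(Nat.gcd h₁ h₂) + 1) * (2*R*(Nat.gcd h₁ h₂)/H + 1) := by
        have e : 2*Δ/(g:ℝ) = 2*(Δ/(g:ℝ)) := by ring
        have hD' : 2*(D:ℝ)+1 ≤ 2*Δ/(g:ℝ)+1 := by rw [e]; linarith
        have hK' : (K:ℝ)+1 ≤ 2*R*(g:ℝ)/H+1 := by linarith
        have := mul_le_mul hD' hK' (by positivity) (by positivity)
        exact this


noncomputable def Quad (R H Δ : ℝ) : Finset ((ℕ × ℕ) × ℕ × ℕ) :=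
  ((Aset R ×ˢ Aset R) ×ˢ (Aset H ×ˢ Aset H)).filter
    (fun p : (ℕ × ℕ) × ℕ × ℕ => |(p.2.1 : ℝ) * p.1.2 - (p.2.2 : ℝ) * p.1.1| ≤ Δ)

lemma quad_decomp (R H Δ : ℝ) :
    (Quad R H Δ).card = ∑ b ∈ Aset H ×ˢ Aset H,
      (((Aset R ×ˢ Aset R).filter
        (fun r : ℕ × ℕ => |(b.1 : ℝ) * r.2 - (b.2 : ℝ) * r.1| ≤ Δ)).card) := by
  rw [Quad, Finset.card_filter, Finset.sum_product, Finset.sum_comm]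
  exact Finset.sum_congr rfl (fun b _ => (Finset.card_filter _ _).symm)

lemma quad_swap (R H Δ : ℝ) : (Quad R H Δ).card = (Quad H R Δ).card := by
  refine Finset.card_bij' (fun p _ => ((p.2.2, p.2.1), (p.1.2, p.1.1)))
    (fun p _ => ((p.2.2, p.2.1), (p.1.2, p.1.1))) ?_ ?_ ?_ ?_
  · intro p hp
    simp only [Quad, Finset.mem_filter, Finset.mem_product] at hp ⊢
    obtain ⟨⟨⟨ha1, ha2⟩, hb1, hb2⟩, habs⟩ := hp
    refine ⟨⟨⟨hb2, hb1⟩, ha2, ha1⟩, ?_⟩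
    calc |((p.1.2 : ℝ)) * p.2.1 - (p.1.1 : ℝ) * p.2.2|
        = |(p.2.1 : ℝ) * p.1.2 - (p.2.2 : ℝ) * p.1.1| := by ring_nf
      _ ≤ Δ := habs
  · intro p hp
    simp only [Quad, Finset.mem_filter, Finset.mem_product] at hp ⊢
    obtain ⟨⟨⟨ha1, ha2⟩, hb1, hb2⟩, habs⟩ := hp
    refine ⟨⟨⟨hb2, hb1⟩, ha2, ha1⟩, ?_⟩
    calc |((p.1.2 : ℝ)) * p.2.1 - (p.1.1 : ℝ) * p.2.2|
        = |(p.2.1 : ℝ) * p.1.2 - (p.2.2 : ℝ) * p.1.1| := by ring_nf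
      _ ≤ Δ := habs
  · intro p _; rfl
  · intro p _; rfl


set_option maxHeartbeats 1000000 in
lemma main_bound (R H Δ : ℝ) (hR : 1 ≤ R) (hH : 1 ≤ H) (hΔ : 1 ≤ Δ) (hHR : H ≤ R) :
    ((Quad R H Δ).card : ℝ) ≤ 36 * (Δ * H * R * (Real.log (4 * H * R) + 1)) := by
  have hH0 : (0:ℝ) < H := by linarith
  have hMge : (1:ℕ) ≤ ⌊2*H⌋₊ := by
    rw [Nat.one_le_iff_ne_zero, ← Nat.pos_iff_ne_zero, Nat.floor_pos]
    linarith
  set M := ⌊2*H⌋₊ with hMdef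
  have hMle : (M:ℝ) ≤ 2*H := Nat.floor_le (by linarith)
  have hcardA : ((Aset H).card : ℝ) ≤ 2*H := by
    have h1 : (Aset H).card ≤ M := by
      calc (Aset H).card ≤ (Finset.Icc 1 M).card := Finset.card_le_card (Finset.filter_subset _ _)
        _ = M := by rw [Nat.card_Icc]; omega
    calc ((Aset H).card : ℝ) ≤ (M:ℝ) := by exact_mod_cast h1
      _ ≤ 2*H := hMle
  have hsubset : Aset H ⊆ Finset.Icc 1 M := Finset.filter_subset _ _
  -- decompose
  rw [quad_decomp]
  push_cast
  have step1 : ∑ b ∈ Aset H ×ˢ Aset H,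
      ((((Aset R ×ˢ Aset R).filter
        (fun r : ℕ × ℕ => |(b.1 : ℝ) * r.2 - (b.2 : ℝ) * r.1| ≤ Δ)).card : ℝ))
      ≤ ∑ b ∈ Aset H ×ˢ Aset H,
        ((4*Δ*R/H + 1) + (2*Δ*(1/(Nat.gcd b.1 b.2 : ℝ)) + (2*R/H)*(Nat.gcd b.1 b.2 : ℝ))) := by
    apply Finset.sum_le_sum
    rintro ⟨b₁, b₂⟩ hb
    simp only [Aset, Finset.mem_product, Finset.mem_filter, Finset.mem_Icc] at hb
    have h1 : 1 ≤ b₁ := hb.1.1.1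
    have h2 : 1 ≤ b₂ := hb.2.1.1
    have h3 : H < (b₂:ℝ) := hb.2.2
    have hic := inner_count R H Δ hR hH hΔ b₁ b₂ h1 h2 h3
    set g := Nat.gcd b₁ b₂ with hgdef
    have hg0 : 0 < g := Nat.gcd_pos_of_pos_left _ (by omega)
    have hgR : (0:ℝ) < g := by exact_mod_cast hg0
    have hexp : (2*Δ/(g:ℝ) + 1) * (2*R*(g:ℝ)/H + 1)
        = (4*Δ*R/H + 1) + (2*Δ*(1/(g:ℝ)) + (2*R/H)*(g:ℝ)) := by
      field_simp
      ring
    calc _ ≤ (2*Δ/(g:ℝ) + 1) * (2*R*(g:ℝ)/H + 1) := hic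
      _ = _ := hexp
  have hsplit : ∑ b ∈ Aset H ×ˢ Aset H,
        ((4*Δ*R/H + 1) + (2*Δ*(1/(Nat.gcd b.1 b.2 : ℝ)) + (2*R/H)*(Nat.gcd b.1 b.2 : ℝ)))
      = ((Aset H ×ˢ Aset H).card : ℝ) * (4*Δ*R/H + 1)
        + 2*Δ * (∑ b ∈ Aset H ×ˢ Aset H, (1/(Nat.gcd b.1 b.2 : ℝ)))
        + (2*R/H) * (∑ b ∈ Aset H ×ˢ Aset H, (Nat.gcd b.1 b.2 : ℝ)) := by
    simp only [Finset.sum_add_distrib, Finset.mul_sum, Finset.sum_const, nsmul_eq_mul, mul_one]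
    ring
  -- individual bounds
  have hBB : ((Aset H ×ˢ Aset H).card : ℝ) ≤ 4*H^2 := by
    rw [Finset.card_product]
    push_cast
    have h0 : (0:ℝ) ≤ ((Aset H).card : ℝ) := by positivity
    nlinarith [hcardA, h0]
  have hS1 : (∑ b ∈ Aset H ×ˢ Aset H, (1/(Nat.gcd b.1 b.2 : ℝ))) ≤ 4*H^2 := by
    calc (∑ b ∈ Aset H ×ˢ Aset H, (1/(Nat.gcd b.1 b.2 : ℝ)))
        ≤ ∑ b ∈ Aset H ×ˢ Aset H, (1:ℝ) := by
          apply Finset.sum_le_sum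
          rintro ⟨b₁, b₂⟩ hb
          simp only [Aset, Finset.mem_product, Finset.mem_filter, Finset.mem_Icc] at hb
          have hg0 : 0 < Nat.gcd b₁ b₂ := Nat.gcd_pos_of_pos_left _ (by omega)
          have : (1:ℝ) ≤ (Nat.gcd b₁ b₂ : ℝ) := by exact_mod_cast hg0
          rw [div_le_one (by linarith)]
          exact this
      _ = ((Aset H ×ˢ Aset H).card : ℝ) := by rw [Finset.sum_const, nsmul_eq_mul, mul_one]
      _ ≤ 4*H^2 := hBB
  have hSg : (∑ b ∈ Aset H ×ˢ Aset H, (Nat.gcd b.1 b.2 : ℝ)) ≤ 4*H^2 * (Real.log (2*H) + 1) := by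
    calc (∑ b ∈ Aset H ×ˢ Aset H, (Nat.gcd b.1 b.2 : ℝ))
        ≤ ∑ b ∈ Finset.Icc 1 M ×ˢ Finset.Icc 1 M, (Nat.gcd b.1 b.2 : ℝ) := by
          apply Finset.sum_le_sum_of_subset_of_nonneg
            (Finset.product_subset_product hsubset hsubset)
          intro i _ _
          positivity
      _ ≤ (M:ℝ)^2 * (Real.log M + 1) := gcd_sum_le M hMge
      _ ≤ 4*H^2 * (Real.log (2*H) + 1) := by
          have hlog : Real.log M ≤ Real.log (2*H) := by
            apply Real.log_le_log (by exact_mod_cast hMge) hMle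
          have hlog0 : (0:ℝ) ≤ Real.log M := Real.log_natCast_nonneg M
          have hM0 : (0:ℝ) ≤ (M:ℝ) := by positivity
          have hM2 : (M:ℝ)^2 ≤ 4*H^2 := by nlinarith [hM0, hMle]
          exact mul_le_mul hM2 (by linarith) (by linarith) (by positivity)
  -- combine
  have hlog24 : Real.log (2*H) ≤ Real.log (4*H*R) := by
    apply Real.log_le_log (by linarith) (by nlinarith)
  have hlog4 : (0:ℝ) ≤ Real.log (4*H*R) := by
    rw [← Real.log_one]
    apply Real.log_le_log (by norm_num) (by nlinarith)
  calc _ ≤ _ := step1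
    _ = _ := hsplit
    _ ≤ 4*H^2 * (4*Δ*R/H + 1) + 2*Δ*(4*H^2) + (2*R/H)*(4*H^2*(Real.log (2*H) + 1)) := by
        have t1 : ((Aset H ×ˢ Aset H).card : ℝ) * (4*Δ*R/H + 1) ≤ 4*H^2 * (4*Δ*R/H + 1) := by
          apply mul_le_mul_of_nonneg_right hBB
          positivity
        have t2 : 2*Δ * (∑ b ∈ Aset H ×ˢ Aset H, (1/(Nat.gcd b.1 b.2 : ℝ))) ≤ 2*Δ*(4*H^2) :=
          mul_le_mul_of_nonneg_left hS1 (by linarith)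
        have t3 : (2*R/H) * (∑ b ∈ Aset H ×ˢ Aset H, (Nat.gcd b.1 b.2 : ℝ))
            ≤ (2*R/H)*(4*H^2*(Real.log (2*H) + 1)) :=
          mul_le_mul_of_nonneg_left hSg (by positivity)
        linarith
    _ ≤ 36 * (Δ * H * R * (Real.log (4 * H * R) + 1)) := by
        have e1 : 4*H^2 * (4*Δ*R/H + 1) = 16*Δ*H*R + 4*H^2 := by field_simp; ring
        have e3 : (2*R/H)*(4*H^2*(Real.log (2*H) + 1)) = 8*H*R*(Real.log (2*H) + 1) := by
          field_simp; ring
        rw [e1, e3]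
        have hHR1 : 1 ≤ H*R := by nlinarith
        have c1 : 8*H*R*Real.log (2*H) ≤ 8*H*R*Real.log (4*H*R) :=
          mul_le_mul_of_nonneg_left hlog24 (by positivity)
        have c2 : 8*H*R*Real.log (4*H*R) ≤ 8*(Δ*H*R)*Real.log (4*H*R) := by
          apply mul_le_mul_of_nonneg_right ?_ hlog4
          nlinarith
        have c5 : H^2 ≤ Δ*H*R := by nlinarith
        have c6 : (0:ℝ) ≤ Δ*H*R*Real.log (4*H*R) := by positivity
        have c7 : H*R ≤ Δ*H*R := by nlinarith
        nlinarith [c1, c2, c5, c6, c7]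


/-- The number of quadruples `(r₁, r₂, h₁, h₂)` of positive integers with
`R < r₁, r₂ ≤ 2R`, `H < h₁, h₂ ≤ 2H` and `|h₁r₂ − h₂r₁| ≤ Δ` is at most
`C·Δ·H·R·(log(4HR)+1)²` for an absolute constant `C`. -/
theorem count_quadruples_divisor_bound :
    ∃ C : ℝ, 0 < C ∧ ∀ R H Δ : ℝ, 1 ≤ R → 1 ≤ H → 1 ≤ Δ →
      ((((((Finset.Icc 1 ⌊2 * R⌋₊).filter (fun r : ℕ => R < (r : ℝ))) ×ˢ
          ((Finset.Icc 1 ⌊2 * R⌋₊).filter (fun r : ℕ => R < (r : ℝ)))) ×ˢ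
         (((Finset.Icc 1 ⌊2 * H⌋₊).filter (fun h : ℕ => H < (h : ℝ))) ×ˢ
          ((Finset.Icc 1 ⌊2 * H⌋₊).filter (fun h : ℕ => H < (h : ℝ))))).filter
        (fun p : (ℕ × ℕ) × ℕ × ℕ =>
          |(p.2.1 : ℝ) * p.1.2 - (p.2.2 : ℝ) * p.1.1| ≤ Δ)).card : ℝ)
      ≤ C * Δ * H * R * (Real.log (4 * H * R) + 1) ^ 2 := by
  refine ⟨36, by norm_num, ?_⟩
  intro R H Δ hR hH hΔ
  show ((Quad R H Δ).card : ℝ) ≤ 36 * Δ * H * R * (Real.log (4 * H * R) + 1) ^ 2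
  have hlog4 : (0:ℝ) ≤ Real.log (4*H*R) := by
    rw [← Real.log_one]
    apply Real.log_le_log (by norm_num) (by nlinarith)
  have h1 : (0:ℝ) ≤ Δ*H*R := by positivity
  have key : 36*(Δ*H*R*(Real.log (4*H*R)+1)) ≤ 36*Δ*H*R*(Real.log (4*H*R)+1)^2 := by
    nlinarith [mul_nonneg (mul_nonneg h1 (by linarith : (0:ℝ) ≤ Real.log (4*H*R)+1)) hlog4]
  rcases le_total H R with h | h
  · calc ((Quad R H Δ).card : ℝ) ≤ 36*(Δ*H*R*(Real.log (4*H*R)+1)) :=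
        main_bound R H Δ hR hH hΔ h
      _ ≤ _ := key
  · rw [quad_swap]
    calc ((Quad H R Δ).card : ℝ) ≤ 36*(Δ*R*H*(Real.log (4*R*H)+1)) :=
        main_bound H R Δ hH hR hΔ h
      _ = 36*(Δ*H*R*(Real.log (4*H*R)+1)) := by rw [show 4*R*H = 4*H*R by ring]; ring
      _ ≤ _ := key
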